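/- Let (I,J,K) be a hypercomplex structure on E. Then Ω^♯ = (1/2)·(I + iK) is a holomorphic symplectic structure on E relative to J; explicitly: ⟨Ω^♯ξ, η⟩ = −⟨ξ, Ω^♯η⟩ for all ξ, η ∈ E_ℂ; Ω^♯(L_J) = 0 and Ω^♯(L*_J) ⊆ L_J; Ω^♯Ω̄^♯ + Ω̄^♯Ω^♯ = −id_{E_ℂ}; and for all ξ, η, ζ ∈ L*_J: ρ(ξ)Ω(η,ζ) − ρ(η)Ω(ξ,ζ) + ρ(ζ)Ω(ξ,η) − Ω(ξ∘η, ζ) + Ω(ξ∘ζ, η) − Ω(η∘ζ, ξ) = 0. -/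

import Mathlib

open scoped TensorProduct
section BC

variable {M N P : Type} [AddCommGroup M] [Module ℝ M] [AddCommGroup N] [Module ℝ N]
  [AddCommGroup P] [Module ℝ P]

/-- Complex-bilinear extension of an `ℝ`-bilinear map to the complexifications. -/
noncomputable def bcBilin (B : M →ₗ[ℝ] N →ₗ[ℝ] P) :
    ℂ ⊗[ℝ] M →ₗ[ℂ] ℂ ⊗[ℝ] N →ₗ[ℂ] ℂ ⊗[ℝ] P :=
  LinearMap.liftBaseChange ℂ ((LinearMap.baseChangeHom ℝ ℂ N P) ∘ₗ B)

/-- Complex conjugation on the complexification `ℂ ⊗[ℝ] M`. -/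
noncomputable def conjT (M : Type) [AddCommGroup M] [Module ℝ M] :
    ℂ ⊗[ℝ] M →ₗ[ℝ] ℂ ⊗[ℝ] M :=
  TensorProduct.map Complex.conjAe.toLinearMap LinearMap.id

/-- The `i`-eigenspace of a `ℂ`-linear endomorphism of `ℂ ⊗[ℝ] M`. -/
def eigP (Jc : ℂ ⊗[ℝ] M →ₗ[ℂ] ℂ ⊗[ℝ] M) : Set (ℂ ⊗[ℝ] M) :=
  {e | Jc e = Complex.I • e}

/-- The `-i`-eigenspace of a `ℂ`-linear endomorphism of `ℂ ⊗[ℝ] M`. -/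
def eigM (Jc : ℂ ⊗[ℝ] M →ₗ[ℂ] ℂ ⊗[ℝ] M) : Set (ℂ ⊗[ℝ] M) :=
  {e | Jc e = -(Complex.I • e)}

end BC

/-- An (algebraic) Courant algebroid: a commutative `ℝ`-algebra `A`, an `A`-module `E`,
a nondegenerate symmetric `A`-bilinear pairing, an anchor with values in `ℝ`-linear
derivations of `A`, a map `Dm : A → E`, and an `ℝ`-bilinear Dorfman bracket. -/
structure CourantAlgebroid (A E : Type) [CommRing A] [Algebra ℝ A]
    [AddCommGroup E] [Module ℝ E] [Module A E] [IsScalarTower ℝ A E] : Type where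
  pair : E →ₗ[A] E →ₗ[A] A
  pair_symm : ∀ x y, pair x y = pair y x
  pair_nondeg : ∀ x, (∀ y, pair x y = 0) → x = 0
  anchor : E →ₗ[A] Derivation ℝ A A
  Dm : A →ₗ[ℝ] E
  pair_Dm : ∀ (f : A) (x : E), pair (Dm f) x = (1/2 : ℝ) • anchor x f
  brac : E →ₗ[ℝ] E →ₗ[ℝ] E
  brac_leibniz : ∀ x y z, brac x (brac y z) = brac (brac x y) z + brac y (brac x z)
  anchor_brac : ∀ (x y : E) (f : A),
    anchor (brac x y) f = anchor x (anchor y f) - anchor y (anchor x f)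
  brac_smul : ∀ (f : A) (x y : E), brac x (f • y) = anchor x f • y + f • brac x y
  brac_add_swap : ∀ x y, brac x y + brac y x = (2 : ℝ) • Dm (pair x y)
  Dm_brac : ∀ (f : A) (x : E), brac (Dm f) x = 0
  anchor_pair : ∀ x y z, anchor x (pair y z) = pair (brac x y) z + pair y (brac x z)

namespace CourantAlgebroid

variable {A E : Type} [CommRing A] [Algebra ℝ A]
    [AddCommGroup E] [Module ℝ E] [Module A E] [IsScalarTower ℝ A E]

/-- The Nijenhuis concomitant of two operators with respect to a bracket. -/
def nijGen {M : Type*} [AddCommGroup M] (br : M → M → M) (F G : M → M) (U V : M) : M :=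
  br (F U) (G V) - F (br U (G V)) - G (br (F U) V) + F (G (br U V))
    + br (G U) (F V) - G (br U (F V)) - F (br (G U) V) + G (F (br U V))

/-- The Nijenhuis concomitant `N(F,G)` of two `A`-linear endomorphisms of `E`. -/
def nij (C : CourantAlgebroid A E) (F G : E →ₗ[A] E) (U V : E) : E :=
  nijGen (fun x y => C.brac x y) (fun e => F e) (fun e => G e) U V

/-- An almost complex structure: an orthogonal endomorphism squaring to `-1`. -/
def IsAlmostComplexStr (C : CourantAlgebroid A E) (J : E →ₗ[A] E) : Prop :=
  (∀ e, J (J e) = -e) ∧ ∀ x y, C.pair (J x) (J y) = C.pair x y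

/-- A complex structure: an almost complex structure with vanishing Nijenhuis concomitant. -/
def IsComplexStr (C : CourantAlgebroid A E) (J : E →ₗ[A] E) : Prop :=
  C.IsAlmostComplexStr J ∧ ∀ U V, C.nij J J U V = 0

/-- An almost hypercomplex structure: a triple of almost complex structures
satisfying the quaternionic relations. -/
def IsAlmostHypercomplex (C : CourantAlgebroid A E) (I J K : E →ₗ[A] E) : Prop :=
  C.IsAlmostComplexStr I ∧ C.IsAlmostComplexStr J ∧ C.IsAlmostComplexStr K ∧
    ∀ e, I (J (K e)) = -e

/-- A hypercomplex structure: an almost hypercomplex structure all of whose six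
Nijenhuis concomitants vanish. -/
def IsHypercomplex (C : CourantAlgebroid A E) (I J K : E →ₗ[A] E) : Prop :=
  C.IsAlmostHypercomplex I J K ∧
    (∀ U V, C.nij I I U V = 0) ∧ (∀ U V, C.nij I J U V = 0) ∧ (∀ U V, C.nij I K U V = 0) ∧
    (∀ U V, C.nij J J U V = 0) ∧ (∀ U V, C.nij J K U V = 0) ∧ (∀ U V, C.nij K K U V = 0)

/-- The Poisson-type bracket on `A` induced by a skew-symmetric endomorphism `F`. -/
def pb (C : CourantAlgebroid A E) (F : E →ₗ[A] E) (f g : A) : A :=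
  C.pair (F (C.Dm f)) (C.Dm g)

/-- `Δ_f(U,V)` associated with an almost hypercomplex triple. -/
def Delta (C : CourantAlgebroid A E) (I J K : E →ₗ[A] E) (f : A) (U V : E) : E :=
  C.pair U V • C.Dm f + C.pair (I U) V • I (C.Dm f) + C.pair (J U) V • J (C.Dm f)
    + C.pair (K U) V • K (C.Dm f)

/-- A hypercomplex connection relative to an almost hypercomplex triple. -/
def IsHConn (C : CourantAlgebroid A E) (I J K : E →ₗ[A] E)
    (conn : E →ₗ[ℝ] E →ₗ[ℝ] E) : Prop :=
  (∀ (f : A) (U V : E), conn (f • U) V = f • conn U V) ∧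
  (∀ (f : A) (U V : E),
    conn U (f • V) = C.anchor U f • V + f • conn U V - C.Delta I J K f U V)

/-- The torsion of an `ℝ`-bilinear connection. -/
noncomputable def torsion (C : CourantAlgebroid A E) (conn : E →ₗ[ℝ] E →ₗ[ℝ] E) (U V : E) : E :=
  conn U V - conn V U - (1/2 : ℝ) • (C.brac U V - C.brac V U)

/-- The canonical hypercomplex connection. -/
noncomputable def hconn (C : CourantAlgebroid A E) (I J K : E →ₗ[A] E) (U V : E) : E :=
  -((1/2 : ℝ) • K (C.brac (J V) (I U) - J (C.brac V (I U)) - I (C.brac (J V) U)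
      + J (I (C.brac V U))))

/-- The pairing as an `ℝ`-bilinear map. -/
noncomputable def pairR (C : CourantAlgebroid A E) : E →ₗ[ℝ] E →ₗ[ℝ] A :=
  LinearMap.mk₂ ℝ (fun x y => C.pair x y)
    (fun x x' y => by simp)
    (fun r x y => by
      show C.pair (r • x) y = r • C.pair x y
      rw [← algebraMap_smul A r x, map_smul, LinearMap.smul_apply, algebraMap_smul])
    (fun x y y' => by simp)
    (fun r x y => by
      show C.pair x (r • y) = r • C.pair x y
      rw [← algebraMap_smul A r y, map_smul, algebraMap_smul])

/-- The anchor as an `ℝ`-bilinear map `E → A → A`. -/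
noncomputable def rhoR (C : CourantAlgebroid A E) : E →ₗ[ℝ] A →ₗ[ℝ] A :=
  LinearMap.mk₂ ℝ (fun x f => C.anchor x f)
    (fun x x' f => by simp)
    (fun r x f => by
      show C.anchor (r • x) f = r • C.anchor x f
      rw [← algebraMap_smul A r x, map_smul, Derivation.smul_apply, algebraMap_smul])
    (fun x f f' => by simp)
    (fun r x f => by simp)

/-- The `A`-module structure on `E` as an `ℝ`-bilinear map. -/
noncomputable def smulR (A E : Type) [CommRing A] [Algebra ℝ A]
    [AddCommGroup E] [Module ℝ E] [Module A E] [IsScalarTower ℝ A E] :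
    A →ₗ[ℝ] E →ₗ[ℝ] E :=
  LinearMap.mk₂ ℝ (fun a e => a • e)
    (fun a a' e => add_smul a a' e)
    (fun r a e => smul_assoc r a e)
    (fun a e e' => smul_add a e e')
    (fun r a e => smul_comm a r e)

/-- Complex-bilinear extension of the pairing. -/
noncomputable def pairC (C : CourantAlgebroid A E) :
    ℂ ⊗[ℝ] E →ₗ[ℂ] ℂ ⊗[ℝ] E →ₗ[ℂ] ℂ ⊗[ℝ] A := bcBilin C.pairR

/-- Complex-bilinear extension of the Dorfman bracket. -/
noncomputable def bracC (C : CourantAlgebroid A E) :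
    ℂ ⊗[ℝ] E →ₗ[ℂ] ℂ ⊗[ℝ] E →ₗ[ℂ] ℂ ⊗[ℝ] E := bcBilin C.brac

/-- Complex-bilinear extension of the anchor. -/
noncomputable def rhoC (C : CourantAlgebroid A E) :
    ℂ ⊗[ℝ] E →ₗ[ℂ] ℂ ⊗[ℝ] A →ₗ[ℂ] ℂ ⊗[ℝ] A := bcBilin C.rhoR

/-- Complex-bilinear extension of the `A`-action on `E`. -/
noncomputable def smulC (C : CourantAlgebroid A E) :
    ℂ ⊗[ℝ] A →ₗ[ℂ] ℂ ⊗[ℝ] E →ₗ[ℂ] ℂ ⊗[ℝ] E := bcBilin (smulR A E)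

/-- The `ℂ`-linear extension of an `A`-linear endomorphism of `E` to `ℂ ⊗[ℝ] E`. -/
noncomputable def cext (F : E →ₗ[A] E) : ℂ ⊗[ℝ] E →ₗ[ℂ] ℂ ⊗[ℝ] E :=
  (F.restrictScalars ℝ).baseChange ℂ

/-- `Ω^♯ = (1/2)(I + iK)` associated with an (almost) hypercomplex triple. -/
noncomputable def OmS (I K : E →ₗ[A] E) : ℂ ⊗[ℝ] E →ₗ[ℂ] ℂ ⊗[ℝ] E :=
  (1/2 : ℂ) • (cext I + Complex.I • cext K)

/-- `Ω̄^♯ = (1/2)(I - iK)` associated with an (almost) hypercomplex triple. -/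
noncomputable def ObS (I K : E →ₗ[A] E) : ℂ ⊗[ℝ] E →ₗ[ℂ] ℂ ⊗[ℝ] E :=
  (1/2 : ℂ) • (cext I - Complex.I • cext K)

/-- `Ω(ξ,η) = ⟨Ω^♯ξ, η⟩`. -/
noncomputable def Omf (C : CourantAlgebroid A E) (I K : E →ₗ[A] E)
    (x y : ℂ ⊗[ℝ] E) : ℂ ⊗[ℝ] A :=
  C.pairC (OmS I K x) y

/-- The complexified hypercomplex connection on `ℂ ⊗[ℝ] E`. -/
noncomputable def hconnC (C : CourantAlgebroid A E) (I J K : E →ₗ[A] E)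
    (U V : ℂ ⊗[ℝ] E) : ℂ ⊗[ℝ] E :=
  -((1/2 : ℂ) • cext K (C.bracC (cext J V) (cext I U) - cext J (C.bracC V (cext I U))
      - cext I (C.bracC (cext J V) U) + cext J (cext I (C.bracC V U))))

end CourantAlgebroid

open CourantAlgebroid

/-! On `L*_J` the operator `Ω^♯` restricts to `I` because `K = IJ`, on `L_J` its two halves
cancel, and `I` maps `L*_J` into `L_J` because `JI = -K`. As `Ω` is skew, `Ω(x, ζ) = ⟨Ix, ζ⟩`
whenever `ζ ∈ L*_J`, so the cocycle expression is the Cartan-type alternating sum of the skew form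
`⟨I·, ·⟩`. The Courant axioms collapse that sum to `⟨ξ∘Iη + Iξ∘η − I(ξ∘η), ζ⟩`, and for
`ξ, η, ζ ∈ L*_J` this is a multiple of `⟨N(I,J)(ξ,η), ζ⟩ = 0`. -/

section QuaternionRelations

variable {R : Type*} [Ring R] {a b c : R}

lemma mul_eq_of_mul_mul_eq_neg_one (hc : c * c = -1) (habc : a * b * c = -1) : a * b = c :=
  calc a * b = -(a * b * (c * c)) := by rw [hc]; noncomm_ring
    _ = c := by rw [← mul_assoc, habc]; noncomm_ring

lemma mul_eq_neg_of_mul_eq (ha : a * a = -1) (hb : b * b = -1) (hc : c * c = -1)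
    (hab : a * b = c) : b * a = -c :=
  calc b * a = (a * a) * (b * a) * (b * b) := by rw [ha, hb]; noncomm_ring
    _ = a * (a * b * (a * b)) * b := by noncomm_ring
    _ = -c := by rw [hab, hc, ← hab]; noncomm_ring

end QuaternionRelations

section Complexification

variable {M N P : Type} [AddCommGroup M] [Module ℝ M] [AddCommGroup N] [Module ℝ N]
  [AddCommGroup P] [Module ℝ P]

@[simp]
lemma bcBilin_tmul (B : M →ₗ[ℝ] N →ₗ[ℝ] P) (z w : ℂ) (m : M) (n : N) :
    bcBilin B (z ⊗ₜ m) (w ⊗ₜ n) = (z * w) ⊗ₜ B m n := by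
  simp [bcBilin, TensorProduct.smul_tmul', smul_eq_mul]

lemma bcBilin_ext {Q : Type} [AddCommGroup Q] [Module ℂ Q]
    {B B' : ℂ ⊗[ℝ] M →ₗ[ℂ] ℂ ⊗[ℝ] N →ₗ[ℂ] Q}
    (h : ∀ m n, B (1 ⊗ₜ m) (1 ⊗ₜ n) = B' (1 ⊗ₜ m) (1 ⊗ₜ n)) : B = B' := by
  ext m n
  exact h m n

end Complexification

namespace CourantAlgebroid

variable {A E : Type} [CommRing A] [Algebra ℝ A] [AddCommGroup E] [Module ℝ E]
    [Module A E] [IsScalarTower ℝ A E]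

@[simp]
lemma cext_tmul (F : E →ₗ[A] E) (z : ℂ) (e : E) : cext F (z ⊗ₜ e) = z ⊗ₜ F e := rfl

lemma cext_mul (F G : Module.End A E) : cext (F * G) = cext F * cext G := by
  ext; simp

lemma cext_neg (F : Module.End A E) : cext (-F) = -cext F := by
  ext; simp [TensorProduct.tmul_neg]

lemma cext_one : cext (1 : Module.End A E) = 1 := by
  ext; simp

lemma cext_apply_cext {F G H : Module.End A E} (h : F * G = H) (x : ℂ ⊗[ℝ] E) :
    cext F (cext G x) = cext H x := by
  rw [← Module.End.mul_apply, ← cext_mul, h]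

lemma cext_mul_self {F : Module.End A E} (hF : F * F = -1) : cext F * cext F = -1 := by
  rw [← cext_mul, hF, cext_neg, cext_one]

lemma OmS_mul_ObS_add_ObS_mul_OmS {I K : Module.End A E} (hI : I * I = -1) (hK : K * K = -1) :
    OmS I K * ObS I K + ObS I K * OmS I K = -1 := by
  have hiK : (Complex.I • cext K) * (Complex.I • cext K) = 1 := by
    rw [smul_mul_smul, cext_mul_self hK, Complex.I_mul_I]
    simp
  have expand : ∀ a b : Module.End ℂ (ℂ ⊗[ℝ] E),
      (a + b) * (a - b) + (a - b) * (a + b) = (2 : ℂ) • (a * a - b * b) := fun a b => by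
    simp only [mul_add, add_mul, mul_sub, sub_mul]
    module
  rw [OmS, ObS, smul_mul_smul, smul_mul_smul, ← smul_add, expand, cext_mul_self hI, hiK]
  module

variable (C : CourantAlgebroid A E)

@[simp]
lemma pairC_tmul (z w : ℂ) (m n : E) : C.pairC (z ⊗ₜ m) (w ⊗ₜ n) = (z * w) ⊗ₜ C.pair m n := by
  simp [pairC, pairR]

@[simp]
lemma bracC_tmul (z w : ℂ) (m n : E) : C.bracC (z ⊗ₜ m) (w ⊗ₜ n) = (z * w) ⊗ₜ C.brac m n := by
  simp [bracC]

@[simp]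
lemma rhoC_tmul (z w : ℂ) (m : E) (f : A) :
    C.rhoC (z ⊗ₜ m) (w ⊗ₜ f) = (z * w) ⊗ₜ C.anchor m f := by
  simp [rhoC, rhoR]

noncomputable def DmC : ℂ ⊗[ℝ] A →ₗ[ℂ] ℂ ⊗[ℝ] E := C.Dm.baseChange ℂ

@[simp]
lemma DmC_tmul (z : ℂ) (f : A) : C.DmC (z ⊗ₜ f) = z ⊗ₜ C.Dm f := rfl

lemma pairC_comm (x y : ℂ ⊗[ℝ] E) : C.pairC x y = C.pairC y x :=
  LinearMap.congr_fun₂ (bcBilin_ext (B' := C.pairC.flip) fun m n => by simp [C.pair_symm m n]) x y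

lemma pairC_cext_left {F : E →ₗ[A] E} (hF : ∀ m n, C.pair (F m) n = -C.pair m (F n))
    (x y : ℂ ⊗[ℝ] E) : C.pairC (cext F x) y = -C.pairC x (cext F y) :=
  LinearMap.congr_fun₂ (bcBilin_ext (B := C.pairC ∘ₗ cext F) (B' := -C.pairC.compl₂ (cext F))
    fun m n => by simp [hF, TensorProduct.tmul_neg]) x y

lemma pairC_DmC (f : ℂ ⊗[ℝ] A) (x : ℂ ⊗[ℝ] E) : C.pairC (C.DmC f) x = (1/2 : ℂ) • C.rhoC x f :=
  LinearMap.congr_fun₂ (bcBilin_ext (B := C.pairC ∘ₗ C.DmC) (B' := (1/2 : ℂ) • C.rhoC.flip)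
    fun m n => by simp [C.pair_Dm, ← algebraMap_smul ℂ]) f x

lemma bracC_add_bracC_swap (x y : ℂ ⊗[ℝ] E) :
    C.bracC x y + C.bracC y x = (2 : ℂ) • C.DmC (C.pairC x y) :=
  LinearMap.congr_fun₂ (bcBilin_ext (B := C.bracC + C.bracC.flip)
    (B' := (2 : ℂ) • C.pairC.compr₂ C.DmC) fun m n => by
      simp [← TensorProduct.tmul_add, C.brac_add_swap, ← algebraMap_smul ℂ (2 : ℝ)]) x y

lemma rhoC_pairC (x y z : ℂ ⊗[ℝ] E) :
    C.rhoC x (C.pairC y z) = C.pairC (C.bracC x y) z + C.pairC y (C.bracC x z) := by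
  induction x using TensorProduct.induction_on with
  | zero => simp
  | add a b ha hb => simp only [map_add, LinearMap.add_apply, ha, hb]; abel
  | tmul c m =>
    exact LinearMap.congr_fun₂ (bcBilin_ext (B := C.pairC.compr₂ (C.rhoC (c ⊗ₜ m)))
      (B' := C.pairC ∘ₗ C.bracC (c ⊗ₜ m) + C.pairC.compl₂ (C.bracC (c ⊗ₜ m)))
      fun n k => by simp [C.anchor_pair, TensorProduct.tmul_add]) y z

lemma nijGen_bracC_cext {F G : E →ₗ[A] E} (hFG : ∀ U V, C.nij F G U V = 0) (x y : ℂ ⊗[ℝ] E) :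
    nijGen (fun x y => C.bracC x y) (cext F) (cext G) x y = 0 := by
  induction x using TensorProduct.induction_on with
  | zero => simp [nijGen]
  | add a b ha hb =>
    simp only [nijGen, map_add, LinearMap.add_apply] at ha hb ⊢
    linear_combination (norm := module) ha + hb
  | tmul c m =>
    induction y using TensorProduct.induction_on with
    | zero => simp [nijGen]
    | add a b ha hb =>
      simp only [nijGen, map_add] at ha hb ⊢
      linear_combination (norm := module) ha + hb
    | tmul d n =>
      have h := hFG m n
      simp only [nij, nijGen] at h
      simp only [nijGen, cext_tmul, bracC_tmul, ← TensorProduct.tmul_sub,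
        ← TensorProduct.tmul_add, h, TensorProduct.tmul_zero]

lemma alternatingSum_rhoC_pairC_of_skew {T : Module.End ℂ (ℂ ⊗[ℝ] E)}
    (hT : ∀ x y, C.pairC (T x) y = -C.pairC x (T y)) (ξ η ζ : ℂ ⊗[ℝ] E) :
    C.rhoC ξ (C.pairC (T η) ζ) - C.rhoC η (C.pairC (T ξ) ζ) + C.rhoC ζ (C.pairC (T ξ) η)
      - C.pairC (T (C.bracC ξ η)) ζ + C.pairC (T (C.bracC ξ ζ)) η
      - C.pairC (T (C.bracC η ζ)) ξ
      = C.pairC (C.bracC ξ (T η) + C.bracC (T ξ) η - T (C.bracC ξ η)) ζ := by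
  have hζ : C.rhoC ζ (C.pairC (T ξ) η) = C.pairC (C.bracC η (T ξ) + C.bracC (T ξ) η) ζ := by
    rw [bracC_add_bracC_swap, map_smul, LinearMap.smul_apply, pairC_DmC, pairC_comm _ (T ξ),
      smul_smul]
    norm_num
  have skew : ∀ x y, C.pairC (T x) y = -C.pairC (T y) x := fun x y => by rw [hT, pairC_comm]
  rw [C.rhoC_pairC ξ, C.rhoC_pairC η, hζ, skew η, skew ξ (C.bracC η ζ)]
  simp only [map_add, map_sub, LinearMap.add_apply, LinearMap.sub_apply]
  abel

variable {C} {I J K : E →ₗ[A] E}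

namespace IsAlmostComplexStr

lemma mul_self_eq_neg_one (hJ : C.IsAlmostComplexStr J) : J * J = -1 :=
  LinearMap.ext hJ.1

lemma pair_apply_left (hJ : C.IsAlmostComplexStr J) (x y : E) :
    C.pair (J x) y = -C.pair x (J y) := by
  rw [← hJ.2 (J x), hJ.1, map_neg, LinearMap.neg_apply]

lemma pairC_cext_left (hJ : C.IsAlmostComplexStr J) (x y : ℂ ⊗[ℝ] E) :
    C.pairC (cext J x) y = -C.pairC x (cext J y) :=
  C.pairC_cext_left hJ.pair_apply_left x y

lemma pairC_cext_of_mem_eigM (hJ : C.IsAlmostComplexStr J) {ζ : ℂ ⊗[ℝ] E}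
    (hζ : ζ ∈ eigM (cext J)) (x : ℂ ⊗[ℝ] E) :
    C.pairC (cext J x) ζ = Complex.I • C.pairC x ζ := by
  rw [hJ.pairC_cext_left, hζ, map_neg, map_smul, neg_neg]

end IsAlmostComplexStr

namespace IsAlmostHypercomplex

lemma mul_eq (h : C.IsAlmostHypercomplex I J K) : I * J = K :=
  mul_eq_of_mul_mul_eq_neg_one h.2.2.1.mul_self_eq_neg_one (LinearMap.ext h.2.2.2)

lemma mul_eq_neg (h : C.IsAlmostHypercomplex I J K) : J * I = -K :=
  mul_eq_neg_of_mul_eq h.1.mul_self_eq_neg_one h.2.1.mul_self_eq_neg_one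
    h.2.2.1.mul_self_eq_neg_one h.mul_eq

end IsAlmostHypercomplex

lemma OmS_apply (I K : E →ₗ[A] E) (x : ℂ ⊗[ℝ] E) :
    OmS I K x = (1/2 : ℂ) • (cext I x + Complex.I • cext K x) := rfl

lemma OmS_apply_of_mem_eigP (hIJ : I * J = K) {e : ℂ ⊗[ℝ] E} (he : e ∈ eigP (cext J)) :
    OmS I K e = 0 := by
  rw [OmS_apply, ← cext_apply_cext hIJ, he, map_smul, smul_smul, Complex.I_mul_I]
  module

lemma OmS_apply_of_mem_eigM (hIJ : I * J = K) {e : ℂ ⊗[ℝ] E} (he : e ∈ eigM (cext J)) :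
    OmS I K e = cext I e := by
  rw [OmS_apply, ← cext_apply_cext hIJ, he, map_neg, map_smul, smul_neg, smul_smul,
    Complex.I_mul_I]
  module

lemma cext_apply_mem_eigP_of_mem_eigM (h : C.IsAlmostHypercomplex I J K) {e : ℂ ⊗[ℝ] E}
    (he : e ∈ eigM (cext J)) : cext I e ∈ eigP (cext J) := by
  rw [eigP, Set.mem_ofPred_eq, cext_apply_cext h.mul_eq_neg, cext_neg, LinearMap.neg_apply,
    ← cext_apply_cext h.mul_eq, he, map_neg, map_smul, neg_neg]

lemma pairC_OmS_left (hI : C.IsAlmostComplexStr I) (hK : C.IsAlmostComplexStr K)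
    (ξ η : ℂ ⊗[ℝ] E) : C.pairC (OmS I K ξ) η = -C.pairC ξ (OmS I K η) := by
  simp only [OmS_apply, map_smul, map_add, LinearMap.smul_apply, LinearMap.add_apply,
    hI.pairC_cext_left, hK.pairC_cext_left]
  module

lemma Omf_of_mem_eigM (h : C.IsAlmostHypercomplex I J K) {ζ : ℂ ⊗[ℝ] E}
    (hζ : ζ ∈ eigM (cext J)) (x : ℂ ⊗[ℝ] E) : C.Omf I K x ζ = C.pairC (cext I x) ζ := by
  rw [Omf, pairC_OmS_left h.1 h.2.2.1, OmS_apply_of_mem_eigM h.mul_eq hζ,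
    h.1.pairC_cext_left]

lemma pairC_bracC_cext_of_mem_eigM (h : C.IsAlmostHypercomplex I J K)
    (hIJ : ∀ U V, C.nij I J U V = 0) {ξ η ζ : ℂ ⊗[ℝ] E} (hξ : ξ ∈ eigM (cext J))
    (hη : η ∈ eigM (cext J)) (hζ : ζ ∈ eigM (cext J)) :
    C.pairC (C.bracC ξ (cext I η) + C.bracC (cext I ξ) η - cext I (C.bracC ξ η)) ζ = 0 := by
  have hN := congrArg (C.pairC · ζ) (C.nijGen_bracC_cext hIJ ξ η)
  simp only [nijGen, hξ.out, hη.out, cext_apply_cext h.mul_eq, cext_apply_cext h.mul_eq_neg,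
    map_add, map_sub, map_neg, map_smul, LinearMap.add_apply, LinearMap.sub_apply,
    LinearMap.neg_apply, LinearMap.smul_apply, map_zero, LinearMap.zero_apply, cext_neg,
    h.2.1.pairC_cext_of_mem_eigM hζ] at hN
  rw [map_sub, map_add, LinearMap.sub_apply, LinearMap.add_apply]
  -- `hN` says that `-2i` times the goal vanishes.
  linear_combination (norm := skip) (Complex.I / 2) • hN
  match_scalars <;> ring_nf <;> simp [Complex.I_sq]

end CourantAlgebroid

theorem stmt13 {A E : Type} [CommRing A] [Algebra ℝ A] [AddCommGroup E] [Module ℝ E]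
    [Module A E] [IsScalarTower ℝ A E] (C : CourantAlgebroid A E) (I J K : E →ₗ[A] E)
    (h : C.IsHypercomplex I J K) :
    (∀ ξ η : ℂ ⊗[ℝ] E, C.pairC (OmS I K ξ) η = -C.pairC ξ (OmS I K η)) ∧
    (∀ e ∈ eigP (cext (A := A) (E := E) J), OmS I K e = 0) ∧
    (∀ e ∈ eigM (cext (A := A) (E := E) J), OmS I K e ∈ eigP (cext (A := A) (E := E) J)) ∧
    (∀ e : ℂ ⊗[ℝ] E, OmS I K (ObS I K e) + ObS I K (OmS I K e) = -e) ∧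
    (∀ ξ η ζ : ℂ ⊗[ℝ] E, ξ ∈ eigM (cext J) → η ∈ eigM (cext J) → ζ ∈ eigM (cext J) →
      C.rhoC ξ (C.Omf I K η ζ) - C.rhoC η (C.Omf I K ξ ζ) + C.rhoC ζ (C.Omf I K ξ η)
        - C.Omf I K (C.bracC ξ η) ζ + C.Omf I K (C.bracC ξ ζ) η
        - C.Omf I K (C.bracC η ζ) ξ = 0) := by
  obtain ⟨hAH, -, hIJ, -⟩ := h
  have hI := hAH.1
  have hK := hAH.2.2.1
  refine ⟨C.pairC_OmS_left hI hK, fun e he => OmS_apply_of_mem_eigP hAH.mul_eq he,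
    fun e he => ?_, fun e => ?_, fun ξ η ζ hξ hη hζ => ?_⟩
  · rw [OmS_apply_of_mem_eigM hAH.mul_eq he]
    exact cext_apply_mem_eigP_of_mem_eigM hAH he
  · exact LinearMap.congr_fun
      (OmS_mul_ObS_add_ObS_mul_OmS hI.mul_self_eq_neg_one hK.mul_self_eq_neg_one) e
  · simp only [Omf_of_mem_eigM hAH hξ, Omf_of_mem_eigM hAH hη, Omf_of_mem_eigM hAH hζ]
    rw [alternatingSum_rhoC_pairC_of_skew C hI.pairC_cext_left]
    exact pairC_bracC_cext_of_mem_eigM hAH hIJ hξ hη hζ
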